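/- arXiv:1711.03109 — 2 statements merged into one kernel-verified Lean document; each statement's English description precedes it below -/
import Mathlib

section
/- For any antisymmetric matrix A ∈ ℂ^{r×r}, the exponential of the quadratic Grassmann form equals the sum of Pfaffians of principal submatrices: exp((1/2) Σ_{j,k} A_{j,k} θ_j θ_k) = Σ_{x ∈ {0,1}^r} Pf(A_{|x}) θ_1^{x_1} θ_2^{x_2} ⋯ θ_r^{x_r}, where A_{|x} denotes the principal submatrix of A on the rows/columns j with x_j = 1. -/
open scoped BigOperators
open Matrix

noncomputable section

/-- The Grassmann algebra on `n` anticommuting generators over `ℂ`,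
realized as the exterior (Clifford with zero form) algebra on `Fin n → ℂ`. -/
abbrev Gr (n : ℕ) := CliffordAlgebra (0 : QuadraticForm ℂ (Fin n → ℂ))

/-- The Grassmann generator `θ_i`. -/
def gen {n : ℕ} (i : Fin n) : Gr n :=
  CliffordAlgebra.ι (0 : QuadraticForm ℂ (Fin n → ℂ)) (Pi.single i 1)

/-- The ordered monomial `θ_1^{x_1} ⋯ θ_n^{x_n}`. -/
def gmono {n : ℕ} (x : Fin n → Bool) : Gr n :=
  ((List.finRange n).map (fun i => if x i then gen i else 1)).prod

/-- The (terminating) exponential power series in the Grassmann algebra. -/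
def gexp {n : ℕ} (a : Gr n) : Gr n :=
  ∑ k ∈ Finset.range (n + 1), (k.factorial : ℂ)⁻¹ • a ^ k

/-- The Pfaffian of an antisymmetric `n × n` complex matrix:
`0` for odd `n`, and `(2^m m!)⁻¹ Σ_σ sgn σ Π_i A_{σ(2i-1) σ(2i)}` for `n = 2m`
(in particular `1` for the empty matrix). -/
def pf {n : ℕ} (A : Matrix (Fin n) (Fin n) ℂ) : ℂ :=
  if h : Even n then
    ((2 : ℂ) ^ (n / 2) * ((n / 2).factorial : ℂ))⁻¹ *
      ∑ σ : Equiv.Perm (Fin n), ((Equiv.Perm.sign σ : ℤ) : ℂ) *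
        ∏ i : Fin (n / 2),
          A (σ ⟨2 * i.1, by obtain ⟨k, hk⟩ := h; have := i.2; omega⟩)
            (σ ⟨2 * i.1 + 1, by obtain ⟨k, hk⟩ := h; have := i.2; omega⟩)
  else 0

/-- The Pfaffian of the principal submatrix `A_{|x}` of `A` supported on the
indices `j` with `x j = true`. -/
def pfRestrict {r : ℕ} (A : Matrix (Fin r) (Fin r) ℂ) (x : Fin r → Bool) : ℂ :=
  pf (fun i j : Fin (Finset.univ.filter (fun j => x j = true)).card =>
    A (((Finset.univ.filter (fun j => x j = true)).orderIsoOfFin rfl) i)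
      (((Finset.univ.filter (fun j => x j = true)).orderIsoOfFin rfl) j))

/-! The `k`-th power of the quadratic form is a sum over words `h` of length `2k` of
`∏ᵢ A_{h(2i), h(2i+1)} / 2` times `θ_{h 0} ⋯ θ_{h (2k-1)}`. Words with a repeated letter vanish,
and a word without repetition is the increasing enumeration of its support `s` composed with a
permutation `σ`, reordering the `θ`'s costing `sign σ`. Hence, after the factor `1 / k!`, the words
with support `s` (`|s| = 2k`) add up to the permutation sum defining `Pf(A_{|s})` times `θ_s`,
and every support of even size occurs for exactly one `k`. -/

theorem List.prod_map_ite_one {α M : Type*} [Monoid M] (p : α → Bool) (f : α → M)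
    (l : List α) :
    (l.map fun a => if p a then f a else 1).prod = ((l.filter p).map f).prod := by
  induction l with
  | nil => rfl
  | cons a l ih => by_cases h : p a <;> simp [h, ih]

theorem List.prod_ofFn_mul {M : Type*} [Monoid M] {m n : ℕ} (f : Fin (m * n) → M) :
    (List.ofFn f).prod =
      (List.ofFn fun i : Fin m =>
        (List.ofFn fun j : Fin n => f (finProdFinEquiv (i, j))).prod).prod := by
  rw [List.ofFn_mul, List.prod_flatten, List.map_ofFn]
  refine congrArg _ (List.ofFn_inj.2 (funext fun i => congrArg _ (List.ofFn_inj.2 (funext fun j =>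
    congrArg f (Fin.ext ?_)))))
  simp only [finProdFinEquiv_apply_val]
  ring

theorem sum_smul_pow {R A ι : Type*} [CommSemiring R] [Semiring A] [Algebra R A] [Fintype ι]
    [DecidableEq ι] (c : ι → R) (v : ι → A) (k : ℕ) :
    (∑ i, c i • v i) ^ k =
      ∑ g : Fin k → ι, (∏ j, c (g j)) • (List.ofFn fun j => v (g j)).prod := by
  rw [← MultilinearMap.mkPiAlgebraFin_apply_const (R := R), MultilinearMap.map_sum]
  simp_rw [MultilinearMap.map_smul_univ, MultilinearMap.mkPiAlgebraFin_apply]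

theorem Function.Injective.exists_perm_comp_eq {ι α : Type*} {e h : ι → α}
    (he : Function.Injective e) (hh : Function.Injective h) (hr : Set.range h = Set.range e) :
    ∃ σ : Equiv.Perm ι, e ∘ σ = h :=
  ⟨(Equiv.ofInjective h hh).trans ((Equiv.setCongr hr).trans (Equiv.ofInjective e he).symm),
    funext fun i => by simp [Equiv.apply_ofInjective_symm]⟩

theorem Fin.sort_univ_filter {r : ℕ} (p : Fin r → Bool) :
    (Finset.univ.filter fun j => p j = true).sort = (List.finRange r).filter p :=
  (Finset.sortedLT_sort _).eq_of_mem_iff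
    ((List.sortedLT_finRange r).pairwise.sublist List.filter_sublist).sortedLT (by simp)

theorem Fintype.sum_fun_eq_sum_finset_sum_perm {α M : Type*} [Fintype α] [LinearOrder α]
    [AddCommMonoid M] {n : ℕ} (F : (Fin n → α) → M)
    (hF : ∀ h, ¬ Function.Injective h → F h = 0) :
    ∑ h, F h =
      ∑ s : Finset α, if hs : s.card = n then ∑ σ : Equiv.Perm (Fin n), F (s.orderEmbOfFin hs ∘ σ)
        else 0 := by
  rw [← Finset.sum_fiberwise Finset.univ (fun h => Finset.univ.image h)]
  refine Finset.sum_congr rfl fun s _ => ?_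
  split_ifs with hs
  · have he : Function.Injective (s.orderEmbOfFin hs) := (s.orderEmbOfFin hs).injective
    rw [← Finset.sum_image (f := F) (g := fun σ : Equiv.Perm (Fin n) => s.orderEmbOfFin hs ∘ σ)
      fun σ _ τ _ hστ => Equiv.ext fun i => he (congrFun hστ i)]
    refine (Finset.sum_subset (fun h hh => ?_) fun h hh hnot => hF h fun hinj => hnot ?_).symm
    · obtain ⟨σ, -, rfl⟩ := Finset.mem_image.1 hh
      simp [Finset.image_comp, Finset.image_univ_equiv]
    · obtain ⟨σ, hσ⟩ := he.exists_perm_comp_eq hinj (by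
        rw [Finset.range_orderEmbOfFin, ← (Finset.mem_filter.1 hh).2]; simp)
      exact Finset.mem_image.2 ⟨σ, Finset.mem_univ _, hσ⟩
  · refine Finset.sum_eq_zero fun h hh => hF h fun hinj => hs ?_
    rw [← (Finset.mem_filter.1 hh).2, Finset.card_image_of_injective _ hinj, Finset.card_fin]

section Grassmann

variable {r : ℕ}

def genProd {n : ℕ} (h : Fin n → Fin r) : Gr r := (List.ofFn fun i => gen (h i)).prod

theorem genProd_eq_ιMulti {n : ℕ} (h : Fin n → Fin r) :
    genProd h = ExteriorAlgebra.ιMulti ℂ (M := Fin r → ℂ) n fun i => Pi.single (h i) (1 : ℂ) := by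
  rw [ExteriorAlgebra.ιMulti_apply]
  rfl

theorem genProd_eq_zero_of_not_injective {n : ℕ} {h : Fin n → Fin r}
    (hh : ¬ Function.Injective h) : genProd h = 0 := by
  obtain ⟨i, j, hij, hne⟩ : ∃ i j, h i = h j ∧ i ≠ j := by
    simpa [Function.Injective] using hh
  rw [genProd_eq_ιMulti]
  exact AlternatingMap.map_eq_zero_of_eq _ _ (by rw [hij]) hne

theorem genProd_comp_perm {n : ℕ} (h : Fin n → Fin r) (σ : Equiv.Perm (Fin n)) :
    genProd (h ∘ σ) = ((Equiv.Perm.sign σ : ℤ) : ℂ) • genProd h := by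
  rw [genProd_eq_ιMulti, genProd_eq_ιMulti, Int.cast_smul_eq_zsmul ℂ, ← Units.smul_def]
  exact (ExteriorAlgebra.ιMulti ℂ (M := Fin r → ℂ) n).map_perm (fun i => Pi.single (h i) (1 : ℂ)) σ

theorem gmono_eq_genProd (x : Fin r → Bool) :
    gmono x = genProd ((Finset.univ.filter fun j => x j = true).orderEmbOfFin rfl) := by
  rw [gmono, List.prod_map_ite_one, ← Fin.sort_univ_filter, genProd, List.ofFn_eq_map,
    ← Finset.listMap_orderEmbOfFin_finRange _ rfl, List.map_map]
  rfl

theorem quadratic_eq_sum_pairs (A : Matrix (Fin r) (Fin r) ℂ) :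
    (2 : ℂ)⁻¹ • ∑ j : Fin r, ∑ k : Fin r, A j k • (gen j * gen k) =
      ∑ p : Fin 2 → Fin r, ((2 : ℂ)⁻¹ * A (p 0) (p 1)) • genProd p := by
  rw [← (piFinTwoEquiv fun _ => Fin r).symm.sum_comp, Fintype.sum_prod_type, Finset.smul_sum]
  simp [genProd, Finset.smul_sum, mul_smul]

theorem pf_eq_sum_perm {n : ℕ} (k : ℕ) (hn : n = 2 * k) (M : Matrix (Fin n) (Fin n) ℂ) :
    pf M = ((2 : ℂ) ^ k * (k.factorial : ℂ))⁻¹ *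
      ∑ σ : Equiv.Perm (Fin n), ((Equiv.Perm.sign σ : ℤ) : ℂ) *
        ∏ i : Fin k, M (σ ⟨2 * i.1, by omega⟩) (σ ⟨2 * i.1 + 1, by omega⟩) := by
  obtain rfl : n / 2 = k := by omega
  exact dif_pos ⟨n / 2, by omega⟩

theorem pf_eq_zero_of_not_even {n : ℕ} (hn : ¬ Even n) (M : Matrix (Fin n) (Fin n) ℂ) :
    pf M = 0 :=
  dif_neg hn

variable (A : Matrix (Fin r) (Fin r) ℂ)

/-- The summand of `(k!)⁻¹ ((1/2) Σ A_{jk} θ_j θ_k)^k` indexed by the word `h` of length `2k`. -/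
def pairingTerm (k : ℕ) (h : Fin (k * 2) → Fin r) : Gr r :=
  (((2 : ℂ) ^ k * (k.factorial : ℂ))⁻¹ *
    ∏ i : Fin k, A (h ⟨2 * i.1, by omega⟩) (h ⟨2 * i.1 + 1, by omega⟩)) • genProd h

theorem inv_factorial_smul_pow_eq_sum_pairingTerm (k : ℕ) :
    (k.factorial : ℂ)⁻¹ • (∑ p : Fin 2 → Fin r, ((2 : ℂ)⁻¹ * A (p 0) (p 1)) • genProd p) ^ k =
      ∑ h : Fin (k * 2) → Fin r, pairingTerm A k h := by
  let e : (Fin k → Fin 2 → Fin r) ≃ (Fin (k * 2) → Fin r) :=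
    (Equiv.curry _ _ _).symm.trans (finProdFinEquiv.arrowCongr (Equiv.refl _))
  rw [sum_smul_pow, Finset.smul_sum]
  refine (Fintype.sum_equiv e.symm _ _ fun h => ?_).symm
  have hfst : ∀ i : Fin k, finProdFinEquiv (i, (0 : Fin 2)) = ⟨2 * i.1, by omega⟩ :=
    fun i => Fin.ext (by simp [mul_comm])
  have hsnd : ∀ i : Fin k, finProdFinEquiv (i, (1 : Fin 2)) = ⟨2 * i.1 + 1, by omega⟩ :=
    fun i => Fin.ext (by simp [add_comm, mul_comm])
  have he : ∀ i j, e.symm h i j = h (finProdFinEquiv (i, j)) := fun _ _ => rfl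
  rw [pairingTerm, genProd, List.prod_ofFn_mul, smul_smul, Finset.prod_mul_distrib,
    Finset.prod_const, Finset.card_univ, Fintype.card_fin, inv_pow]
  simp only [genProd, he, hfst, hsnd]
  congr 1
  ring

theorem pf_submatrix_smul_genProd_eq_sum_perm (k : ℕ) (e : Fin (k * 2) → Fin r) :
    pf (A.submatrix e e) • genProd e =
      ∑ σ : Equiv.Perm (Fin (k * 2)), pairingTerm A k (e ∘ σ) := by
  rw [pf_eq_sum_perm k (mul_comm k 2), Finset.mul_sum, Finset.sum_smul]
  refine Finset.sum_congr rfl fun σ _ => ?_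
  rw [pairingTerm, genProd_comp_perm, smul_smul]
  congr 1
  simp only [Matrix.submatrix_apply, Function.comp_apply]
  ring

/-- `Pf(A_{|s}) θ_s`, where `θ_s` is the product of the `θ_j`, `j ∈ s`, in increasing order. -/
def pfMonomial (s : Finset (Fin r)) : Gr r :=
  pf (A.submatrix (s.orderEmbOfFin rfl) (s.orderEmbOfFin rfl)) • genProd (s.orderEmbOfFin rfl)

theorem pfMonomial_eq_of_card_eq (s : Finset (Fin r)) {n : ℕ} (hs : s.card = n) :
    pfMonomial A s =
      pf (A.submatrix (s.orderEmbOfFin hs) (s.orderEmbOfFin hs)) • genProd (s.orderEmbOfFin hs) := by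
  subst hs
  rfl

theorem pfMonomial_eq_zero_of_not_even (s : Finset (Fin r)) (hs : ¬ Even s.card) :
    pfMonomial A s = 0 := by
  rw [pfMonomial, pf_eq_zero_of_not_even hs, zero_smul]

theorem sum_range_dite_card_eq_pfMonomial (s : Finset (Fin r)) :
    ∑ k ∈ Finset.range (r + 1),
      (if hs : s.card = k * 2 then
        ∑ σ : Equiv.Perm (Fin (k * 2)), pairingTerm A k (s.orderEmbOfFin hs ∘ σ) else 0) =
      pfMonomial A s := by
  by_cases heven : Even s.card
  · obtain ⟨m, hm⟩ := heven
    have hmr : m < r + 1 := by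
      have := s.card_le_univ
      rw [Fintype.card_fin] at this
      omega
    rw [Finset.sum_eq_single_of_mem m (Finset.mem_range.2 hmr) fun k _ hk => dif_neg (by omega),
      dif_pos (by omega), ← pf_submatrix_smul_genProd_eq_sum_perm, ← pfMonomial_eq_of_card_eq]
  · rw [pfMonomial_eq_zero_of_not_even A s heven]
    exact Finset.sum_eq_zero fun k _ => dif_neg fun hk => heven ⟨k, by omega⟩

theorem sum_pfMonomial_eq_sum_pfRestrict_smul_gmono :
    ∑ s : Finset (Fin r), pfMonomial A s = ∑ x : Fin r → Bool, pfRestrict A x • gmono x := by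
  let e : (Fin r → Bool) ≃ Finset (Fin r) :=
    { toFun x := Finset.univ.filter fun j => x j = true
      invFun s j := decide (j ∈ s)
      left_inv x := by funext j; simp
      right_inv s := by ext j; simp }
  rw [← e.sum_comp]
  refine Finset.sum_congr rfl fun x _ => ?_
  rw [pfMonomial, gmono_eq_genProd]
  rfl

end Grassmann

theorem gaussian_grassmann_pfaffian_expansion_general (r : ℕ) (A : Matrix (Fin r) (Fin r) ℂ) :
    gexp ((2 : ℂ)⁻¹ • ∑ j : Fin r, ∑ k : Fin r, A j k • (gen j * gen k)) =
      ∑ x : Fin r → Bool, pfRestrict A x • gmono x := by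
  have hvanish : ∀ k (h : Fin (k * 2) → Fin r), ¬ Function.Injective h → pairingTerm A k h = 0 :=
    fun k h hh => by rw [pairingTerm, genProd_eq_zero_of_not_injective hh, smul_zero]
  rw [quadratic_eq_sum_pairs, gexp, ← sum_pfMonomial_eq_sum_pfRestrict_smul_gmono]
  simp_rw [inv_factorial_smul_pow_eq_sum_pairingTerm,
    Fintype.sum_fun_eq_sum_finset_sum_perm _ (hvanish _)]
  rw [Finset.sum_comm]
  simp_rw [sum_range_dite_card_eq_pfMonomial]

/-- for antisymmetric `A`,
`exp((1/2) Σ_{j,k} A_{j,k} θ_j θ_k) = Σ_{x ∈ {0,1}^r} Pf(A_{|x}) θ_1^{x_1}⋯θ_r^{x_r}`. -/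
theorem gaussian_grassmann_pfaffian_expansion (r : ℕ) (A : Matrix (Fin r) (Fin r) ℂ)
    (hA : Aᵀ = -A) :
    gexp ((2 : ℂ)⁻¹ • ∑ j : Fin r, ∑ k : Fin r, A j k • (gen j * gen k)) =
      ∑ x : Fin r → Bool, pfRestrict A x • gmono x :=
  gaussian_grassmann_pfaffian_expansion_general r A
end
end

section
/- Let T1: {0,1}^{r1} → ℂ and T2: {0,1}^{r2} → ℂ be tensors with Grassmann characteristic functions Φ_{T1}(θ) = Σ_x T1(x) θ_1^{x_1}⋯θ_{r1}^{x_{r1}} and Φ_{T2}(η) = Σ_y T2(y) η_1^{y_1}⋯η_{r2}^{y_{r2}}. Then the Grassmann integral ∫dη_1 ∫dθ_{r1} Φ_{T1}(θ) Φ_{T2}(η) exp(θ_{r1} η_1) equals the characteristic function of the contracted tensor T_{1⋆2}(x,y) = Σ_{z∈{0,1}} T1(x,z) T2(z,y), in the remaining variables (θ_1,…,θ_{r1−1}, η_2,…,η_{r2}). -/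
open scoped BigOperators
open Matrix

noncomputable section

/-- The Berezin integral `∫ dξ_i`, i.e. the left Grassmann derivative with
respect to the generator `ξ_i`: it satisfies `∫dξ ξ = 1` and `∫dξ 1 = 0`. -/
def berezin {n : ℕ} (i : Fin n) : Gr n →ₗ[ℂ] Gr n :=
  CliffordAlgebra.contractLeft (Q := (0 : QuadraticForm ℂ (Fin n → ℂ)))
    (LinearMap.proj i)

/-- In `Gr (r₁+1+(r₂+1))`, the generator `θ_i`, `1 ≤ i ≤ r₁+1`. -/
def θv (r₁ r₂ : ℕ) (i : Fin (r₁ + 1)) : Gr ((r₁ + 1) + (r₂ + 1)) :=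
  gen (Fin.castAdd (r₂ + 1) i)

/-- In `Gr (r₁+1+(r₂+1))`, the generator `η_j`, `1 ≤ j ≤ r₂+1`. -/
def ηv (r₁ r₂ : ℕ) (j : Fin (r₂ + 1)) : Gr ((r₁ + 1) + (r₂ + 1)) :=
  gen (Fin.natAdd (r₁ + 1) j)

/-- The ordered monomial `θ_1^{x_1} ⋯ θ_{r₁+1}^{x_{r₁+1}}`. -/
def θmono (r₁ r₂ : ℕ) (x : Fin (r₁ + 1) → Bool) : Gr ((r₁ + 1) + (r₂ + 1)) :=
  ((List.finRange (r₁ + 1)).map (fun i => if x i then θv r₁ r₂ i else 1)).prod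

/-- The ordered monomial `η_1^{y_1} ⋯ η_{r₂+1}^{y_{r₂+1}}`. -/
def ηmono (r₁ r₂ : ℕ) (y : Fin (r₂ + 1) → Bool) : Gr ((r₁ + 1) + (r₂ + 1)) :=
  ((List.finRange (r₂ + 1)).map (fun j => if y j then ηv r₁ r₂ j else 1)).prod

variable {n : ℕ}
def w (l : List (Fin n)) : Gr n := (l.map gen).prod
@[simp] lemma w_nil : w ([] : List (Fin n)) = 1 := rfl
@[simp] lemma w_cons (i : Fin n) (l : List (Fin n)) : w (i :: l) = gen i * w l := by simp [w]
@[simp] lemma w_append (l l' : List (Fin n)) : w (l ++ l') = w l * w l' := by simp [w]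
@[simp] lemma w_singleton (i : Fin n) : w [i] = gen i := by simp [w]

lemma gen_anticomm (i j : Fin n) : gen i * gen j = - (gen j * gen i) := by
  have h : gen i * gen j + gen j * gen i = 0 := by
    simpa [QuadraticMap.polar, gen] using
      CliffordAlgebra.ι_mul_ι_add_swap (Q := (0 : QuadraticForm ℂ (Fin n → ℂ)))
      (Pi.single i 1) (Pi.single j 1)
  exact eq_neg_of_add_eq_zero_left h

@[simp] lemma gen_sq (i : Fin n) : gen i * gen i = 0 := by
  simpa [gen] using CliffordAlgebra.ι_sq_scalar (Q := (0 : QuadraticForm ℂ (Fin n → ℂ)))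
    (Pi.single i 1)

lemma berezin_gen_mul (i a : Fin n) (x : Gr n) :
    berezin i (gen a * x) = (if i = a then (1:ℂ) else 0) • x - gen a * berezin i x := by
  have h := CliffordAlgebra.contractLeft_ι_mul (Q := (0 : QuadraticForm ℂ (Fin n → ℂ)))
    (d := LinearMap.proj i) (Pi.single a 1) x
  simpa [berezin, gen, Pi.single_apply, ite_smul] using h

@[simp] lemma berezin_one (i : Fin n) : berezin i (1 : Gr n) = 0 :=
  CliffordAlgebra.contractLeft_one _ _

lemma berezin_w_not_mem {i : Fin n} {l : List (Fin n)} (h : i ∉ l) : berezin i (w l) = 0 := by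
  induction l with
  | nil => simp
  | cons a t ih =>
    simp only [List.mem_cons, not_or] at h
    rw [w_cons, berezin_gen_mul, if_neg h.1, ih h.2, zero_smul, mul_zero, sub_zero]

lemma berezin_w_mem {i : Fin n} {l t : List (Fin n)} (hl : i ∉ l) (ht : i ∉ t) :
    berezin i (w (l ++ i :: t)) = ((-1:ℂ)) ^ l.length • w (l ++ t) := by
  induction l with
  | nil =>
    simp [w_cons, berezin_gen_mul, berezin_w_not_mem ht]
  | cons a s ih =>
    simp only [List.mem_cons, not_or] at hl
    rw [List.cons_append, w_cons, berezin_gen_mul, if_neg hl.1, zero_smul, zero_sub,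
      ih hl.2, List.length_cons, pow_succ, List.cons_append, w_cons, mul_smul_comm, ← neg_smul]
    congr 1
    ring

lemma gen_mul_w_swap (i : Fin n) (l : List (Fin n)) :
    gen i * w l = ((-1:ℂ)) ^ l.length • (w l * gen i) := by
  induction l with
  | nil => simp
  | cons a t ih =>
    rw [w_cons, ← mul_assoc, gen_anticomm i a, List.length_cons, pow_succ, neg_mul,
      mul_assoc, ih, mul_smul_comm, ← neg_smul, mul_assoc]
    congr 1
    ring

lemma w_mul_gen_eq_zero {i : Fin n} {l : List (Fin n)} (h : i ∈ l) : w l * gen i = 0 := by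
  induction l with
  | nil => simp at h
  | cons a t ih =>
    rw [w_cons, mul_assoc]
    rcases List.mem_cons.1 h with h1 | h2
    · subst h1
      by_cases ht : i ∈ t
      · rw [ih ht, mul_zero]
      · have : w t * gen i = ((-1:ℂ)) ^ t.length • (gen i * w t) := by
          rw [gen_mul_w_swap, smul_smul, ← pow_add]
          rw [Even.neg_one_pow ⟨t.length, by ring⟩, one_smul]
        rw [this, mul_smul_comm, ← mul_assoc, gen_sq, zero_mul, smul_zero]
    · rw [ih h2, mul_zero]

lemma mono_eq {m : ℕ} (f : Fin m → Fin n) (p : Fin m → Bool) (l : List (Fin m)) :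
    (l.map (fun i => if p i then gen (f i) else 1)).prod = w ((l.filter p).map f) := by
  induction l with
  | nil => simp
  | cons a t ih => by_cases h : p a <;> simp [List.filter_cons, h, ih]

section main
variable (r₁ r₂ : ℕ)

def tL : Fin ((r₁ + 1) + (r₂ + 1)) := Fin.castAdd (r₂ + 1) (Fin.last r₁)
def e0 : Fin ((r₁ + 1) + (r₂ + 1)) := Fin.natAdd (r₁ + 1) (0 : Fin (r₂ + 1))
def fθ (i : Fin r₁) : Fin ((r₁ + 1) + (r₂ + 1)) := Fin.castAdd (r₂ + 1) i.castSucc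
def fη (j : Fin r₂) : Fin ((r₁ + 1) + (r₂ + 1)) := Fin.natAdd (r₁ + 1) j.succ
def Lθ (x : Fin r₁ → Bool) : List (Fin ((r₁ + 1) + (r₂ + 1))) :=
  ((List.finRange r₁).filter (fun i => x i)).map (fθ r₁ r₂)
def Lη (y : Fin r₂ → Bool) : List (Fin ((r₁ + 1) + (r₂ + 1))) :=
  ((List.finRange r₂).filter (fun j => y j)).map (fη r₁ r₂)

lemma θmono_snoc (x : Fin r₁ → Bool) (z : Bool) :
    θmono r₁ r₂ (Fin.snoc x z) =
      w (Lθ r₁ r₂ x ++ (if z then [tL r₁ r₂] else [])) := by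
  rw [θmono]
  simp only [θv]
  refine (mono_eq (fun i => Fin.castAdd (r₂ + 1) i) (fun i => (Fin.snoc x z : Fin (r₁+1) → Bool) i) _).trans ?_
  congr 1
  rw [List.finRange_succ_last, List.filter_append, List.filter_map, List.map_append,
    List.map_map]
  congr 1
  · rw [Lθ]
    congr 1
    · congr 1
      funext i
      simp [Function.comp, Fin.snoc_castSucc]
  · cases z <;> simp [List.filter, tL, Fin.snoc_last]

lemma ηmono_cons (y : Fin r₂ → Bool) (z : Bool) :
    ηmono r₁ r₂ (Fin.cons z y) =
      w ((if z then [e0 r₁ r₂] else []) ++ Lη r₁ r₂ y) := by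
  rw [ηmono]
  simp only [ηv]
  refine (mono_eq (fun j => Fin.natAdd (r₁ + 1) j) (fun j => (Fin.cons z y : Fin (r₂+1) → Bool) j) _).trans ?_
  congr 1
  rw [List.finRange_succ, List.filter_cons, List.filter_map]
  have hy : ((fun j => (Fin.cons z y : Fin (r₂+1) → Bool) j) ∘ Fin.succ) = fun j => y j := by
    funext j; simp [Fin.cons_succ]
  rw [hy]
  cases z <;> simp [Lη, fη, e0, Fin.cons_zero, List.map_map, Function.comp]

end main

section keys
variable {t e : Fin n} {A B : List (Fin n)}
variable (htA : t ∉ A) (htB : t ∉ B) (heA : e ∉ A) (heB : e ∉ B) (hte : t ≠ e)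

include htA htB heA heB hte in
lemma K00 : berezin e (berezin t (w A * w B * (1 + gen t * gen e))) = w (A ++ B) := by
  have h1 : w A * w B * (1 + gen t * gen e) = w (A ++ B) + w ((A ++ B) ++ t :: [e]) := by
    simp [mul_add, mul_assoc]
  rw [h1, map_add, berezin_w_not_mem (by simp [htA, htB]),
    berezin_w_mem (l := A ++ B) (by simp [htA, htB]) (by simp [hte]), zero_add, _root_.map_smul]
  have h2 : (A ++ B) ++ [e] = (A ++ B) ++ e :: [] := rfl
  rw [h2, berezin_w_mem (l := A ++ B) (by simp [heA, heB]) (by simp), smul_smul, ← pow_add,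
    Even.neg_one_pow ⟨(A ++ B).length, by ring⟩, one_smul, List.append_nil]

include htA htB heA heB in
lemma K10 : berezin e (berezin t (w (A ++ [t]) * w B * (1 + gen t * gen e))) = 0 := by
  have h1 : w (A ++ [t]) * w B * (1 + gen t * gen e) =
      w ((A ++ [t]) ++ B) + w ((A ++ [t]) ++ B) * gen t * gen e := by
    rw [mul_add, mul_one, ← w_append, mul_assoc]
  rw [h1, w_mul_gen_eq_zero (by simp), zero_mul, add_zero]
  have h2 : (A ++ [t]) ++ B = A ++ t :: B := by simp
  rw [h2, berezin_w_mem htA htB, _root_.map_smul, berezin_w_not_mem (by simp [heA, heB]), smul_zero]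

include htA htB heA heB hte in
lemma K01 : berezin e (berezin t (w A * w ([e] ++ B) * (1 + gen t * gen e))) = 0 := by
  have h1 : w A * w ([e] ++ B) * (1 + gen t * gen e) =
      w (A ++ ([e] ++ B)) + w ((A ++ ([e] ++ B)) ++ [t]) * gen e := by
    rw [mul_add, mul_one, ← w_append, w_append (A ++ ([e] ++ B)) [t], w_singleton,
      mul_assoc]
  rw [h1, w_mul_gen_eq_zero (by simp), add_zero,
    berezin_w_not_mem (by simp [htA, htB, hte]), map_zero]

include htA htB heA heB hte in
lemma K11 : berezin e (berezin t (w (A ++ [t]) * w ([e] ++ B) * (1 + gen t * gen e))) =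
    w (A ++ B) := by
  have h1 : w (A ++ [t]) * w ([e] ++ B) * (1 + gen t * gen e) =
      w (A ++ t :: e :: B) + w (A ++ t :: e :: B) * gen t * gen e := by
    rw [mul_add, mul_one, ← w_append, mul_assoc]
    have : (A ++ [t]) ++ ([e] ++ B) = A ++ t :: e :: B := by simp
    rw [this]
  rw [h1, w_mul_gen_eq_zero (by simp), zero_mul, add_zero,
    berezin_w_mem htA (by simp [hte, htB]), _root_.map_smul,
    berezin_w_mem heA heB, smul_smul, ← pow_add,
    Even.neg_one_pow ⟨A.length, by ring⟩, one_smul]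
end keys

section main2
variable (r₁ r₂ : ℕ)

lemma tL_not_mem_Lθ (x : Fin r₁ → Bool) : tL r₁ r₂ ∉ Lθ r₁ r₂ x := by
  intro h
  obtain ⟨i, -, hi⟩ := List.mem_map.1 h
  have := congrArg Fin.val hi
  simp [fθ, tL] at this
  have := i.isLt; omega

lemma tL_not_mem_Lη (y : Fin r₂ → Bool) : tL r₁ r₂ ∉ Lη r₁ r₂ y := by
  intro h
  obtain ⟨j, -, hj⟩ := List.mem_map.1 h
  have := congrArg Fin.val hj
  simp [fη, tL] at this
  omega

lemma e0_not_mem_Lθ (x : Fin r₁ → Bool) : e0 r₁ r₂ ∉ Lθ r₁ r₂ x := by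
  intro h
  obtain ⟨i, -, hi⟩ := List.mem_map.1 h
  have := congrArg Fin.val hi
  simp [fθ, e0] at this
  have := i.isLt; omega

lemma e0_not_mem_Lη (y : Fin r₂ → Bool) : e0 r₁ r₂ ∉ Lη r₁ r₂ y := by
  intro h
  obtain ⟨j, -, hj⟩ := List.mem_map.1 h
  have := congrArg Fin.val hj
  simp [fη, e0] at this

lemma tL_ne_e0 : tL r₁ r₂ ≠ e0 r₁ r₂ := by
  intro h
  have := congrArg Fin.val h
  simp [tL, e0] at this

lemma key (x : Fin r₁ → Bool) (y : Fin r₂ → Bool) (z wb : Bool) :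
    berezin (e0 r₁ r₂) (berezin (tL r₁ r₂)
      (θmono r₁ r₂ (Fin.snoc x z) * ηmono r₁ r₂ (Fin.cons wb y) *
        (1 + gen (tL r₁ r₂) * gen (e0 r₁ r₂)))) =
    if z = wb then w (Lθ r₁ r₂ x ++ Lη r₁ r₂ y) else 0 := by
  have h1 := tL_not_mem_Lθ r₁ r₂ x
  have h2 := tL_not_mem_Lη r₁ r₂ y
  have h3 := e0_not_mem_Lθ r₁ r₂ x
  have h4 := e0_not_mem_Lη r₁ r₂ y
  have h5 := tL_ne_e0 r₁ r₂
  rw [θmono_snoc, ηmono_cons]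
  cases z <;> cases wb
  · simpa using K00 h1 h2 h3 h4 h5
  · simpa using K01 h1 h2 h3 h4 h5
  · simpa using K10 h1 h2 h3 h4
  · simpa using K11 h1 h2 h3 h4 h5

end main2


set_option maxHeartbeats 1000000 in
/-- the Grassmann integral
`∫dη_1 ∫dθ_{r₁} Φ_{T₁}(θ) Φ_{T₂}(η) exp(θ_{r₁} η_1)` equals the characteristic
function of the contracted tensor `T_{1⋆2}(x,y) = Σ_z T₁(x,z) T₂(z,y)` in the
remaining variables `(θ_1,…,θ_{r₁−1}, η_2,…,η_{r₂})`.
Here the tensors have ranks `r₁ + 1` and `r₂ + 1` (so both ranks are ≥ 1). -/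
theorem grassmann_integral_contraction (r₁ r₂ : ℕ)
    (T₁ : (Fin (r₁ + 1) → Bool) → ℂ) (T₂ : (Fin (r₂ + 1) → Bool) → ℂ) :
    berezin (Fin.natAdd (r₁ + 1) (0 : Fin (r₂ + 1)))
      (berezin (Fin.castAdd (r₂ + 1) (Fin.last r₁))
        ((∑ x : Fin (r₁ + 1) → Bool, T₁ x • θmono r₁ r₂ x) *
         (∑ y : Fin (r₂ + 1) → Bool, T₂ y • ηmono r₁ r₂ y) *
         (1 + θv r₁ r₂ (Fin.last r₁) * ηv r₁ r₂ 0))) =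
      ∑ x : Fin r₁ → Bool, ∑ y : Fin r₂ → Bool,
        (∑ z : Bool, T₁ (Fin.snoc x z) * T₂ (Fin.cons z y)) •
          (θmono r₁ r₂ (Fin.snoc x false) * ηmono r₁ r₂ (Fin.cons false y)) := by

  simp only [show Fin.natAdd (r₁+1) (0 : Fin (r₂+1)) = e0 r₁ r₂ from rfl,
    show Fin.castAdd (r₂+1) (Fin.last r₁) = tL r₁ r₂ from rfl,
    show θv r₁ r₂ (Fin.last r₁) = gen (tL r₁ r₂) from rfl,
    show ηv r₁ r₂ (0 : Fin (r₂+1)) = gen (e0 r₁ r₂) from rfl]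
  -- rewrite the RHS monomials
  have hM : ∀ (x : Fin r₁ → Bool) (y : Fin r₂ → Bool),
      θmono r₁ r₂ (Fin.snoc x false) * ηmono r₁ r₂ (Fin.cons false y) =
        w (Lθ r₁ r₂ x ++ Lη r₁ r₂ y) := by
    intro x y
    rw [θmono_snoc, ηmono_cons]
    simp
  -- reindexing lemmas
  have hx : ∀ (G : (Fin (r₁+1) → Bool) → Gr ((r₁+1)+(r₂+1))),
      (∑ x : Fin (r₁+1) → Bool, G x) = ∑ z : Bool, ∑ x : Fin r₁ → Bool, G (Fin.snoc x z) := by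
    intro G
    rw [← Equiv.sum_comp (Fin.snocEquiv (fun _ => Bool)) G, Fintype.sum_prod_type]
    exact Finset.sum_congr rfl fun z _ => Finset.sum_congr rfl fun xx _ => rfl
  have hy : ∀ (G : (Fin (r₂+1) → Bool) → Gr ((r₁+1)+(r₂+1))),
      (∑ y : Fin (r₂+1) → Bool, G y) = ∑ z : Bool, ∑ y : Fin r₂ → Bool, G (Fin.cons z y) := by
    intro G
    rw [← Equiv.sum_comp (Fin.consEquiv (fun _ => Bool)) G, Fintype.sum_prod_type]
    exact Finset.sum_congr rfl fun z _ => Finset.sum_congr rfl fun yy _ => rfl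
  -- expand the product of sums
  have expand : (∑ x : Fin (r₁+1) → Bool, T₁ x • θmono r₁ r₂ x) *
      (∑ y : Fin (r₂+1) → Bool, T₂ y • ηmono r₁ r₂ y) *
      (1 + gen (tL r₁ r₂) * gen (e0 r₁ r₂)) =
      ∑ x : Fin (r₁+1) → Bool, ∑ y : Fin (r₂+1) → Bool, (T₁ x * T₂ y) •
        (θmono r₁ r₂ x * ηmono r₁ r₂ y * (1 + gen (tL r₁ r₂) * gen (e0 r₁ r₂))) := by
    rw [Finset.sum_mul_sum, Finset.sum_mul]
    refine Finset.sum_congr rfl fun x _ => ?_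
    rw [Finset.sum_mul]
    refine Finset.sum_congr rfl fun y _ => ?_
    simp only [smul_mul_assoc, mul_smul_comm, smul_smul, mul_comm (T₂ y) (T₁ x)]
  rw [expand]
  simp only [map_sum, _root_.map_smul]
  rw [hx]
  have step : ∀ (z : Bool) (x : Fin r₁ → Bool),
      (∑ y : Fin (r₂+1) → Bool, (T₁ (Fin.snoc x z) * T₂ y) •
        berezin (e0 r₁ r₂) (berezin (tL r₁ r₂)
          (θmono r₁ r₂ (Fin.snoc x z) * ηmono r₁ r₂ y *
            (1 + gen (tL r₁ r₂) * gen (e0 r₁ r₂))))) =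
      ∑ wb : Bool, ∑ y : Fin r₂ → Bool,
        (if z = wb then (T₁ (Fin.snoc x z) * T₂ (Fin.cons wb y)) •
          w (Lθ r₁ r₂ x ++ Lη r₁ r₂ y) else 0) := by
    intro z x
    rw [hy]
    refine Finset.sum_congr rfl fun wb _ => Finset.sum_congr rfl fun y _ => ?_
    rw [key]
    split <;> simp
  calc (∑ z : Bool, ∑ x : Fin r₁ → Bool,
        ∑ y : Fin (r₂+1) → Bool, (T₁ (Fin.snoc x z) * T₂ y) •
          berezin (e0 r₁ r₂) (berezin (tL r₁ r₂)
            (θmono r₁ r₂ (Fin.snoc x z) * ηmono r₁ r₂ y *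
              (1 + gen (tL r₁ r₂) * gen (e0 r₁ r₂)))))
      = ∑ z : Bool, ∑ x : Fin r₁ → Bool, ∑ wb : Bool, ∑ y : Fin r₂ → Bool,
          (if z = wb then (T₁ (Fin.snoc x z) * T₂ (Fin.cons wb y)) •
            w (Lθ r₁ r₂ x ++ Lη r₁ r₂ y) else 0) :=
        Finset.sum_congr rfl fun z _ => Finset.sum_congr rfl fun x _ => step z x
    _ = ∑ x : Fin r₁ → Bool, ∑ z : Bool, ∑ wb : Bool, ∑ y : Fin r₂ → Bool,
          (if z = wb then (T₁ (Fin.snoc x z) * T₂ (Fin.cons wb y)) •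
            w (Lθ r₁ r₂ x ++ Lη r₁ r₂ y) else 0) := Finset.sum_comm
    _ = ∑ x : Fin r₁ → Bool, ∑ z : Bool, ∑ y : Fin r₂ → Bool, ∑ wb : Bool,
          (if z = wb then (T₁ (Fin.snoc x z) * T₂ (Fin.cons wb y)) •
            w (Lθ r₁ r₂ x ++ Lη r₁ r₂ y) else 0) :=
        Finset.sum_congr rfl fun x _ => Finset.sum_congr rfl fun z _ => Finset.sum_comm
    _ = ∑ x : Fin r₁ → Bool, ∑ y : Fin r₂ → Bool, ∑ z : Bool, ∑ wb : Bool,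
          (if z = wb then (T₁ (Fin.snoc x z) * T₂ (Fin.cons wb y)) •
            w (Lθ r₁ r₂ x ++ Lη r₁ r₂ y) else 0) :=
        Finset.sum_congr rfl fun x _ => Finset.sum_comm
    _ = ∑ x : Fin r₁ → Bool, ∑ y : Fin r₂ → Bool,
          (∑ z : Bool, T₁ (Fin.snoc x z) * T₂ (Fin.cons z y)) •
            (θmono r₁ r₂ (Fin.snoc x false) * ηmono r₁ r₂ (Fin.cons false y)) := by
        refine Finset.sum_congr rfl fun x _ => Finset.sum_congr rfl fun y _ => ?_
        rw [hM, Finset.sum_smul]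
        refine Finset.sum_congr rfl fun z _ => ?_
        rw [Finset.sum_ite_eq]
        simp
end
end
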